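/- arXiv:1504.05015 — 2 statements merged into one kernel-verified Lean document; each statement's English description precedes it below -/
import Mathlib

section
/- Let F be a Minkowski norm on ℝⁿ with strict triangle inequality, and let 𝓛 denote its Legendre transformation (which is injective on ℝⁿ∖{0}). Given three distinct unit vectors X, Y, Z (F(X)=F(Y)=F(Z)=1), the subspace {W ∈ ℝⁿ : 𝓛_X(W) = 𝓛_Y(W) = 𝓛_Z(W)} has dimension at most n − 2, where 𝓛_X(W) := g_X(X, W) is the linear functional given by the fundamental tensor at X. -/
/-!
Write `ℓ_u := 𝓛_u`. For a unit vector `u` one has `ℓ_u(u) = 1` by homogeneity, while for a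
different unit vector `w` convexity of `s ↦ F(u + s w)` along the chord from `u` to `u + w` gives
`ℓ_u(w) ≤ F(u + w) - 1 < 1`, the last step by strict convexity. These two facts alone show that
`ℓ_X - ℓ_Z` is never a multiple of `ℓ_X - ℓ_Y` (evaluate at `X`, `Y`, `Z`), so the two functionals
are independent and their common kernel has codimension two.
-/

structure MinkowskiNorm (n : ℕ) where
  F : EuclideanSpace ℝ (Fin n) → ℝ
  nonneg : ∀ v, 0 ≤ F v
  eq_zero_iff : ∀ v, F v = 0 ↔ v = 0
  homog : ∀ (c : ℝ) (v : EuclideanSpace ℝ (Fin n)), 0 < c → F (c • v) = c * F v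
  triangle : ∀ u v, F (u + v) ≤ F u + F v
  triangle_strict : ∀ u v, u ≠ 0 → v ≠ 0 → F (u + v) = F u + F v →
    ∃ β : ℝ, 0 ≤ β ∧ u = β • v

open Topology Module LinearMap

lemma finrank_ker_inf_ker_add_two_le {K E : Type*} [Field K] [AddCommGroup E] [Module K E]
    [FiniteDimensional K E] {f g : E →ₗ[K] K} (hf : f ≠ 0) (hg : ∀ c : K, g ≠ c • f) :
    finrank K ↥(ker f ⊓ ker g) + 2 ≤ finrank K E := by
  have hnot : ¬ ker f ≤ ker g := fun hle => by
    have hspan := mem_span_of_iInf_ker_le_ker (L := fun _ : Unit => f) (K := g) (by simpa using hle)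
    obtain ⟨c, rfl⟩ := Submodule.mem_span_singleton.1 (by simpa using hspan)
    exact hg c rfl
  have hlt : finrank K ↥(ker f ⊓ ker g) < finrank K ↥(ker f) :=
    Submodule.finrank_lt_finrank_of_lt (inf_le_left.lt_of_ne fun h => hnot (h ▸ inf_le_right))
  have := Module.Dual.finrank_ker_add_one_of_ne_zero hf
  omega

section PositivelyHomogeneous

variable {E : Type*} [AddCommGroup E] [Module ℝ E] {F : E → ℝ}

lemma deriv_sq_add_smul_self (hhom : ∀ (c : ℝ) v, 0 < c → F (c • v) = c * F v) {y : E}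
    (hy : F y = 1) : deriv (fun s : ℝ => F (y + s • y) ^ 2) 0 = 2 := by
  have hev : (fun s : ℝ => F (y + s • y) ^ 2) =ᶠ[𝓝 0] fun s => (1 + s) ^ 2 := by
    filter_upwards [Ioi_mem_nhds (show (-1 : ℝ) < 0 by norm_num)] with s hs
    rw [show y + s • y = (1 + s) • y by module, hhom _ _ (by linarith [hs.out]), hy, mul_one]
  rw [hev.deriv_eq]
  simpa using (((hasDerivAt_id' (0 : ℝ)).const_add 1).fun_pow 2).deriv

lemma le_of_hasDerivAt_sq_add_smul (hnn : ∀ v, 0 ≤ F v)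
    (hhom : ∀ (c : ℝ) v, 0 < c → F (c • v) = c * F v) (htri : ∀ u v, F (u + v) ≤ F u + F v)
    {u w : E} (hu : F u = 1) {d : ℝ}
    (hd : HasDerivAt (fun s : ℝ => F (u + s • w) ^ 2) d 0) :
    d ≤ 2 * (F (u + w) - 1) := by
  set M := F (u + w)
  set φ : ℝ → ℝ := fun s => F (u + s • w) ^ 2 - (1 + s * (M - 1)) ^ 2
  have hchord : ∀ s ∈ Set.Ioo (0 : ℝ) 1, F (u + s • w) ≤ 1 + s * (M - 1) := by
    rintro s ⟨hs0, hs1⟩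
    calc F (u + s • w) = F ((1 - s) • u + s • (u + w)) := by congr 1; module
      _ ≤ F ((1 - s) • u) + F (s • (u + w)) := htri _ _
      _ = 1 + s * (M - 1) := by rw [hhom _ _ (by linarith), hhom _ _ hs0, hu]; ring
  have hmax : IsLocalMaxOn φ (Set.Ici 0) 0 := by
    filter_upwards [Ico_mem_nhdsGE (show (0 : ℝ) < 1 by norm_num)] with s ⟨hs0, hs1⟩
    rcases hs0.eq_or_lt with rfl | hs0
    · rfl
    · have hsq := pow_le_pow_left₀ (hnn _) (hchord s ⟨hs0, hs1⟩) 2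
      have hφ0 : φ 0 = 0 := by simp [φ, hu]
      rw [hφ0]
      exact sub_nonpos.2 hsq
  have hφ : HasDerivAt φ (d - 2 * (M - 1)) 0 := by
    have hpoly := (((hasDerivAt_id' (0 : ℝ)).mul_const (M - 1)).const_add 1).fun_pow 2
    exact (hd.sub hpoly).congr_deriv (by norm_num)
  have hnonpos := hmax.hasFDerivWithinAt_nonpos hφ.hasFDerivAt.hasFDerivWithinAt
    (mem_posTangentConeAt_of_segment_subset (y := (1 : ℝ))
      (by simpa [segment_eq_Icc] using Set.Icc_subset_Ici_self))
  simp only [ContinuousLinearMap.toSpanSingleton_apply, smul_eq_mul, one_mul] at hnonpos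
  linarith

end PositivelyHomogeneous

lemma sub_ne_smul_sub {E : Type*} [AddCommGroup E] [Module ℝ E] {ℓ : E → E →ₗ[ℝ] ℝ}
    {S : Set E} (hself : ∀ u ∈ S, ℓ u u = 1) (hlt : ∀ u ∈ S, ∀ w ∈ S, u ≠ w → ℓ u w < 1)
    {x y z : E} (hx : x ∈ S) (hy : y ∈ S) (hz : z ∈ S) (hxy : x ≠ y) (hxz : x ≠ z) (hyz : y ≠ z)
    (c : ℝ) : ℓ x - ℓ z ≠ c • (ℓ x - ℓ y) := by
  intro h
  have e (w : E) : ℓ x w - ℓ z w = c * (ℓ x w - ℓ y w) := by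
    simpa using LinearMap.congr_fun h w
  have ex := e x
  have ey := e y
  have ez := e z
  rw [hself x hx] at ex
  rw [hself y hy] at ey
  rw [hself z hz] at ez
  -- evaluating at `x`, then `y`, forces `0 < c < 1`; evaluating at `z` then gives `ℓ x z > 1`
  have hc0 : 0 < c := by nlinarith [hlt z hz x hx hxz.symm, hlt y hy x hx hxy.symm]
  have hc1 : c < 1 := by nlinarith [hlt z hz y hy hyz.symm, hlt x hx y hy hxy]
  nlinarith [mul_pos hc0 (sub_pos.2 (hlt y hy z hz hyz)),
    mul_pos (sub_pos.2 hc1) (sub_pos.2 (hlt x hx z hz hxz))]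

namespace MinkowskiNorm

variable {n : ℕ} (N : MinkowskiNorm n)

lemma ne_zero_of_eq_one {v : EuclideanSpace ℝ (Fin n)} (h : N.F v = 1) : v ≠ 0 :=
  fun h0 => one_ne_zero (h ▸ (N.eq_zero_iff v).2 h0)

lemma add_lt_two {u w : EuclideanSpace ℝ (Fin n)} (hu : N.F u = 1) (hw : N.F w = 1)
    (huw : u ≠ w) : N.F (u + w) < 2 := by
  have hlt : N.F (u + w) < N.F u + N.F w := (N.triangle u w).lt_of_ne fun h => huw <| by
    obtain ⟨β, hβ0, hβ⟩ :=
      N.triangle_strict u w (N.ne_zero_of_eq_one hu) (N.ne_zero_of_eq_one hw) h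
    rcases hβ0.eq_or_lt with rfl | hβpos
    · exact absurd (by simpa using hβ) (N.ne_zero_of_eq_one hu)
    · have hβ1 : β = 1 := by
        simpa [hu, hw] using (N.homog β w hβpos).symm.trans (congrArg N.F hβ.symm)
      rw [hβ, hβ1, one_smul]
  rwa [hu, hw, one_add_one_eq_two] at hlt

lemma deriv_sq_add_smul_lt_two {u w : EuclideanSpace ℝ (Fin n)} (hu : N.F u = 1)
    (hw : N.F w = 1) (huw : u ≠ w) : deriv (fun s : ℝ => N.F (u + s • w) ^ 2) 0 < 2 := by
  by_cases hd : DifferentiableAt ℝ (fun s : ℝ => N.F (u + s • w) ^ 2) 0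
  · linarith [le_of_hasDerivAt_sq_add_smul N.nonneg N.homog N.triangle hu hd.hasDerivAt,
      N.add_lt_two hu hw huw]
  · rw [deriv_zero_of_not_differentiableAt hd]
    norm_num

end MinkowskiNorm

theorem stmt1_general {n : ℕ} (N : MinkowskiNorm n)
    (Leg : EuclideanSpace ℝ (Fin n) → (EuclideanSpace ℝ (Fin n) →ₗ[ℝ] ℝ))
    (hLeg : ∀ y w, Leg y w = (1/2) * deriv (fun s : ℝ => (N.F (y + s • w))^2) 0)
    (X Y Z : EuclideanSpace ℝ (Fin n))
    (hX : N.F X = 1) (hY : N.F Y = 1) (hZ : N.F Z = 1)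
    (hXY : X ≠ Y) (hXZ : X ≠ Z) (hYZ : Y ≠ Z) :
    Module.finrank ℝ
      ↥(LinearMap.ker (Leg X - Leg Y) ⊓ LinearMap.ker (Leg X - Leg Z)) ≤ n - 2 := by
  set S := {u | N.F u = 1}
  have hself : ∀ u ∈ S, Leg u u = 1 := fun u hu => by
    rw [hLeg, deriv_sq_add_smul_self N.homog hu]
    norm_num
  have hlt : ∀ u ∈ S, ∀ w ∈ S, u ≠ w → Leg u w < 1 := fun u hu w hw huw => by
    rw [hLeg]
    linarith [N.deriv_sq_add_smul_lt_two hu hw huw]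
  have hLXY : Leg X - Leg Y ≠ 0 := fun h => by
    have hX' := LinearMap.congr_fun h X
    simp only [LinearMap.sub_apply, hself X hX, LinearMap.zero_apply] at hX'
    linarith [hlt Y hY X hX hXY.symm]
  have hcodim :=
    finrank_ker_inf_ker_add_two_le hLXY (sub_ne_smul_sub hself hlt hX hY hZ hXY hXZ hYZ)
  rw [finrank_euclideanSpace_fin] at hcodim
  omega

/-- Given the Legendre transformation `Leg` of a Minkowski norm
(`Leg y = g_y(y, ·) = ½ D(F²)(y)`, injective away from the origin), for three
distinct unit vectors `X, Y, Z` the subspace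
`{W : 𝓛_X(W) = 𝓛_Y(W) = 𝓛_Z(W)}` has dimension at most `n − 2`. -/
theorem stmt1 {n : ℕ} (N : MinkowskiNorm n)
    (Leg : EuclideanSpace ℝ (Fin n) → (EuclideanSpace ℝ (Fin n) →ₗ[ℝ] ℝ))
    (hLeg : ∀ y w, Leg y w = (1/2) * deriv (fun s : ℝ => (N.F (y + s • w))^2) 0)
    (hinj : ∀ y z : EuclideanSpace ℝ (Fin n), y ≠ 0 → z ≠ 0 → Leg y = Leg z → y = z)
    (X Y Z : EuclideanSpace ℝ (Fin n))
    (hX : N.F X = 1) (hY : N.F Y = 1) (hZ : N.F Z = 1)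
    (hXY : X ≠ Y) (hXZ : X ≠ Z) (hYZ : Y ≠ Z) :
    Module.finrank ℝ
      ↥(LinearMap.ker (Leg X - Leg Y) ⊓ LinearMap.ker (Leg X - Leg Z)) ≤ n - 2 :=
  stmt1_general N Leg hLeg X Y Z hX hY hZ hXY hXZ hYZ
end

section
/- Let F be a Minkowski norm on a vector space with reversibility λ := sup_{v≠0} F(−v)/F(v) and uniformity constant Λ := sup over unit vectors X,Y,Z of g_X(Y,Y)/g_Z(Y,Y). Then λ ≤ √Λ. -/
/-!
Uniformity extends from unit vectors to all nonzero base points and all directions, since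
`g_y(v,v)` is invariant under positive rescaling of `y` and quadratic in `v`. Comparing the base
points `-v` and `v` in the direction `-v` then gives
`F(-v)² = g_{-v}(-v,-v) ≤ Λ g_v(-v,-v) = Λ g_v(v,v) = Λ F(v)²`.
-/

namespace MinkowskiNorm

variable {n : ℕ} (N : MinkowskiNorm n)

theorem F_pos {v : EuclideanSpace ℝ (Fin n)} (hv : v ≠ 0) : 0 < N.F v :=
  (N.nonneg v).lt_of_ne fun h => hv ((N.eq_zero_iff v).mp h.symm)

theorem F_inv_smul_self {v : EuclideanSpace ℝ (Fin n)} (hv : v ≠ 0) :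
    N.F ((N.F v)⁻¹ • v) = 1 := by
  rw [N.homog _ _ (inv_pos.mpr (N.F_pos hv)), inv_mul_cancel₀ (N.F_pos hv).ne']

theorem fundamental_tensor_le_of_ne_zero
    {g : EuclideanSpace ℝ (Fin n) → EuclideanSpace ℝ (Fin n) → EuclideanSpace ℝ (Fin n) → ℝ}
    {Λ : ℝ}
    (hg_quad : ∀ y v (c : ℝ), g y (c • v) (c • v) = c^2 * g y v v)
    (hg_base : ∀ y v (c : ℝ), 0 < c → g (c • y) v v = g y v v)
    (hΛ : ∀ X Y Z, N.F X = 1 → N.F Y = 1 → N.F Z = 1 → g X Y Y ≤ Λ * g Z Y Y)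
    {X Z : EuclideanSpace ℝ (Fin n)} (hX : X ≠ 0) (hZ : Z ≠ 0) (Y : EuclideanSpace ℝ (Fin n)) :
    g X Y Y ≤ Λ * g Z Y Y := by
  have base_normalize : ∀ {y} (hy : y ≠ 0) v, g y v v = g ((N.F y)⁻¹ • y) v v := fun {y} hy v => by
    rw [← hg_base ((N.F y)⁻¹ • y) v _ (N.F_pos hy), smul_inv_smul₀ (N.F_pos hy).ne']
  rw [base_normalize hX, base_normalize hZ]
  by_cases hY : Y = 0
  · have hg_zero : ∀ y, g y 0 0 = 0 := fun y => by
      simpa using hg_quad y 0 0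
    simp [hY, hg_zero]
  · set Y₁ := (N.F Y)⁻¹ • Y
    have direction_normalize : ∀ y, g y Y Y = N.F Y ^ 2 * g y Y₁ Y₁ := fun y => by
      rw [← hg_quad, smul_inv_smul₀ (N.F_pos hY).ne']
    rw [direction_normalize, direction_normalize, mul_left_comm]
    gcongr
    exact hΛ _ _ _ (N.F_inv_smul_self hX) (N.F_inv_smul_self hY) (N.F_inv_smul_self hZ)

end MinkowskiNorm

theorem le_sqrt_mul_of_sq_le_mul_sq {a b Λ : ℝ} (ha : 0 ≤ a) (h : b ^ 2 ≤ Λ * a ^ 2) :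
    b ≤ Real.sqrt Λ * a := by
  calc b ≤ |b| := le_abs_self b
    _ ≤ Real.sqrt (Λ * a ^ 2) := Real.abs_le_sqrt h
    _ = Real.sqrt Λ * a := by rw [Real.sqrt_mul' _ (sq_nonneg a), Real.sqrt_sq ha]

theorem stmt2_general {n : ℕ} (N : MinkowskiNorm n)
    (g : EuclideanSpace ℝ (Fin n) → EuclideanSpace ℝ (Fin n) → EuclideanSpace ℝ (Fin n) → ℝ)
    (Λ : ℝ)
    (hg_norm : ∀ y, y ≠ 0 → g y y y = (N.F y)^2)
    (hg_quad : ∀ y v (c : ℝ), g y (c • v) (c • v) = c^2 * g y v v)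
    (hg_base : ∀ y v (c : ℝ), 0 < c → g (c • y) v v = g y v v)
    (hΛ : ∀ X Y Z, N.F X = 1 → N.F Y = 1 → N.F Z = 1 → g X Y Y ≤ Λ * g Z Y Y) :
    ∀ v, v ≠ 0 → N.F (-v) ≤ Real.sqrt Λ * N.F v := by
  intro v hv
  have hg_neg : g v (-v) (-v) = g v v v := by
    simpa using hg_quad v v (-1)
  have h_sq : N.F (-v) ^ 2 ≤ Λ * N.F v ^ 2 := by
    calc N.F (-v) ^ 2 = g (-v) (-v) (-v) := (hg_norm _ (neg_ne_zero.mpr hv)).symm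
      _ ≤ Λ * g v (-v) (-v) :=
        N.fundamental_tensor_le_of_ne_zero hg_quad hg_base hΛ (neg_ne_zero.mpr hv) hv _
      _ = Λ * N.F v ^ 2 := by rw [hg_neg, hg_norm v hv]
  exact le_sqrt_mul_of_sq_le_mul_sq (N.nonneg v) h_sq

/-- For a Minkowski norm with fundamental tensor `g` and uniformity constant
`Λ` (i.e. `g_X(Y,Y) ≤ Λ g_Z(Y,Y)` for all unit `X, Y, Z`), the reversibility
satisfies `F(−v) ≤ √Λ · F(v)` for all `v ≠ 0`; that is, `λ ≤ √Λ`. -/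
theorem stmt2 {n : ℕ} (N : MinkowskiNorm n)
    (g : EuclideanSpace ℝ (Fin n) → EuclideanSpace ℝ (Fin n) → EuclideanSpace ℝ (Fin n) → ℝ)
    (Λ : ℝ) (hΛ1 : 1 ≤ Λ)
    (hg_norm : ∀ y, y ≠ 0 → g y y y = (N.F y)^2)
    (hg_quad : ∀ y v (c : ℝ), g y (c • v) (c • v) = c^2 * g y v v)
    (hg_base : ∀ y v (c : ℝ), 0 < c → g (c • y) v v = g y v v)
    (hg_pos : ∀ y v, y ≠ 0 → 0 ≤ g y v v)
    (hΛ : ∀ X Y Z, N.F X = 1 → N.F Y = 1 → N.F Z = 1 → g X Y Y ≤ Λ * g Z Y Y) :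
    ∀ v, v ≠ 0 → N.F (-v) ≤ Real.sqrt Λ * N.F v :=
  stmt2_general N g Λ hg_norm hg_quad hg_base hΛ
end
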